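/- arXiv:2301.05167 — 2 statements merged into one kernel-verified Lean document; each statement's English description precedes it below -/
import Mathlib

section
/- No quantile mechanism over the buyer's distribution achieves a constant fraction of the optimal welfare: for every ε > 0 and every Borel probability measure Q on [0,1], there exists an instance I = (F_S, F_B) of bilateral trade with F_B atomless and 0 < OPT(I) < ∞ such that ∫ W(I, F_B^{-1}(x)) dQ(x) ≤ ε · OPT(I). -/
open MeasureTheory

/-- Expected welfare of the fixed price `p` on the bilateral-trade instance `(μ, ν)`. -/
noncomputable def welfare (μ ν : Measure ℝ) (p : ℝ) : ℝ :=
  ∫ z : ℝ × ℝ, (z.1 + if z.1 ≤ p ∧ p ≤ z.2 then z.2 - z.1 else 0) ∂(μ.prod ν)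

/-- Optimal welfare `OPT(I) = E[max(S,B)]`. -/
noncomputable def optWelfare (μ ν : Measure ℝ) : ℝ :=
  ∫ z : ℝ × ℝ, max z.1 z.2 ∂(μ.prod ν)

/-- The quantile function of a measure `F` on `ℝ`:
`F⁻¹(x) = inf { y | F((−∞,y]) ≥ x }`. -/
noncomputable def quantileFn (F : Measure ℝ) (x : ℝ) : ℝ :=
  sInf { y : ℝ | x ≤ (F (Set.Iic y)).toReal }

/-!
The seller's value is `2`; the buyer's value is uniform on `(0, 1)` with probability `1 - δ` and
uniform on `(M, M + 1)` with probability `δ`. Quantiles `x ≤ 1 - δ` post a price at most `1`,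
below the seller's value; the quantile `1` posts the top `M + 1` of the support; quantiles
outside `[0, 1]` post the junk price `0`. None of these prices lead to trade, so the mechanism
earns `2` outside the window `(1 - δ, 1)` and at most `OPT` inside it. Choose `δ` with
`Q (1 - δ, 1) ≤ ε / 2`, then `M` with `δ M ≥ 4 / ε`: as `OPT ≥ δ M`, the expected welfare is at
most `2 + (ε / 2) OPT ≤ ε OPT`.
-/

open Set Filter Topology

section BilateralTrade

variable {μ ν : Measure ℝ}

lemma tradeWelfare_mem_Icc {s b p : ℝ} (hs : 0 ≤ s) :
    (s + if s ≤ p ∧ p ≤ b then b - s else 0) ∈ Icc 0 (max s b) := by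
  split_ifs with h
  · exact ⟨by linarith [h.1, h.2], by simp⟩
  · exact ⟨by simpa using hs, by simp⟩

lemma welfare_nonneg (hμ : ∀ᵐ s ∂μ, 0 ≤ s) (p : ℝ) : 0 ≤ welfare μ ν p :=
  integral_nonneg_of_ae <| (Measure.quasiMeasurePreserving_fst.ae hμ).mono
    fun _ hz => (tradeWelfare_mem_Icc hz).1

lemma welfare_le_optWelfare (hμ : ∀ᵐ s ∂μ, 0 ≤ s)
    (hint : Integrable (fun z : ℝ × ℝ => max z.1 z.2) (μ.prod ν)) (p : ℝ) :
    welfare μ ν p ≤ optWelfare μ ν := by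
  have hpos : ∀ᵐ z ∂μ.prod ν, 0 ≤ z.1 := Measure.quasiMeasurePreserving_fst.ae hμ
  exact integral_mono_of_nonneg (hpos.mono fun _ hz => (tradeWelfare_mem_Icc hz).1) hint
    (hpos.mono fun _ hz => (tradeWelfare_mem_Icc hz).2)

variable [SFinite ν]

lemma welfare_dirac (s p : ℝ) :
    welfare (Measure.dirac s) ν p = ∫ b, (s + if s ≤ p ∧ p ≤ b then b - s else 0) ∂ν := by
  rw [welfare, Measure.dirac_prod, (measurableEmbedding_prodMk_left s).integral_map]

lemma optWelfare_dirac (s : ℝ) : optWelfare (Measure.dirac s) ν = ∫ b, max s b ∂ν := by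
  rw [optWelfare, Measure.dirac_prod, (measurableEmbedding_prodMk_left s).integral_map]

lemma integrable_max_dirac_prod_iff (s : ℝ) :
    Integrable (fun z : ℝ × ℝ => max z.1 z.2) ((Measure.dirac s).prod ν) ↔
      Integrable (fun b => max s b) ν := by
  rw [Measure.dirac_prod, (measurableEmbedding_prodMk_left s).integrable_map_iff]
  rfl

lemma welfare_dirac_of_ae_not_trade [IsProbabilityMeasure ν] {s p : ℝ}
    (h : ∀ᵐ b ∂ν, ¬(s ≤ p ∧ p ≤ b)) : welfare (Measure.dirac s) ν p = s := by
  rw [welfare_dirac, integral_congr_ae (g := fun _ => s), integral_const, probReal_univ,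
    one_smul]
  filter_upwards [h] with b hb
  simp [hb]

end BilateralTrade

section Quantile

variable {F : Measure ℝ} {x y z : ℝ}

lemma quantileFn_of_nonpos (hx : x ≤ 0) : quantileFn F x = 0 := by
  have huniv : {y : ℝ | x ≤ (F (Iic y)).toReal} = univ :=
    eq_univ_of_forall fun _ => hx.trans ENNReal.toReal_nonneg
  rw [quantileFn, huniv, Real.sInf_of_not_bddBelow not_bddBelow_univ]

lemma quantileFn_of_one_lt [IsProbabilityMeasure F] (hx : 1 < x) : quantileFn F x = 0 := by
  have hempty : {y : ℝ | x ≤ (F (Iic y)).toReal} = ∅ :=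
    eq_empty_of_forall_notMem fun _ hy => (measureReal_le_one.trans_lt hx).not_ge hy
  rw [quantileFn, hempty, Real.sInf_empty]

lemma quantileFn_le [IsProbabilityMeasure F] (hx : 0 < x) (hy : x ≤ F.real (Iic y)) :
    quantileFn F x ≤ y := by
  refine csInf_le ?_ hy
  obtain ⟨t, ht⟩ := ((ProbabilityTheory.tendsto_cdf_atBot F).eventually_lt_const hx).exists
  refine ⟨t, fun u hu => le_of_not_gt fun hut => ?_⟩
  have := (ProbabilityTheory.cdf F).mono hut.le
  rw [ProbabilityTheory.cdf_eq_real] at this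
  exact absurd (hu.trans this) (not_le.2 ht)

lemma le_quantileFn (hy : x ≤ F.real (Iic y)) (h : ∀ t < z, F.real (Iic t) < x) :
    z ≤ quantileFn F x :=
  le_csInf ⟨y, hy⟩ fun _ ht => le_of_not_gt fun htz => (h _ htz).not_ge ht

end Quantile

lemma exists_measure_Ioo_sub_lt (Q : Measure ℝ) [IsFiniteMeasure Q] (a : ℝ) {η : ENNReal}
    (hη : 0 < η) : ∃ δ ∈ Ioo (0 : ℝ) 1, Q (Ioo (a - δ) a) < η := by
  have hlim : Tendsto (fun δ => Q (Ioo (a - δ) a)) (𝓝[>] 0)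
      (𝓝 (Q (⋂ δ > (0 : ℝ), Ioo (a - δ) a))) :=
    tendsto_measure_biInter_gt (fun _ _ => measurableSet_Ioo.nullMeasurableSet)
      (fun _ _ _ hij => Ioo_subset_Ioo (by linarith) le_rfl) ⟨1, one_pos, measure_ne_top _ _⟩
  have hempty : (⋂ δ > (0 : ℝ), Ioo (a - δ) a) = ∅ :=
    eq_empty_of_forall_notMem fun t ht => by
      have hta : t < a := (mem_iInter₂.1 ht 1 one_pos).2
      have := (mem_iInter₂.1 ht (a - t) (by linarith)).1
      linarith
  rw [hempty, measure_empty] at hlim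
  exact (Eventually.and (Ioo_mem_nhdsGT one_pos) (hlim.eventually_lt_const hη)).exists

noncomputable def lowHighUniform (δ M : ℝ) : Measure ℝ :=
  ENNReal.ofReal (1 - δ) • volume.restrict (Ioo 0 1) +
    ENNReal.ofReal δ • volume.restrict (Ioo M (M + 1))

section LowHighUniform

variable {δ M : ℝ}

lemma lowHighUniform_apply {s : Set ℝ} (hs : MeasurableSet s) :
    lowHighUniform δ M s = ENNReal.ofReal (1 - δ) * volume (s ∩ Ioo 0 1) +
      ENNReal.ofReal δ * volume (s ∩ Ioo M (M + 1)) := by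
  simp only [lowHighUniform, Measure.add_apply, Measure.smul_apply, Measure.restrict_apply hs,
    smul_eq_mul]

lemma isProbabilityMeasure_lowHighUniform (hδ : δ ∈ Icc (0 : ℝ) 1) :
    IsProbabilityMeasure (lowHighUniform δ M) := by
  constructor
  rw [lowHighUniform_apply MeasurableSet.univ, univ_inter, univ_inter, Real.volume_Ioo,
    Real.volume_Ioo, sub_zero, add_sub_cancel_left, ENNReal.ofReal_one, mul_one, mul_one,
    ← ENNReal.ofReal_add (by linarith [hδ.2]) hδ.1, sub_add_cancel, ENNReal.ofReal_one]

lemma lowHighUniform_absolutelyContinuous (hM : 0 ≤ M) :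
    lowHighUniform δ M ≪ volume.restrict (Ioo 0 (M + 1)) := by
  refine Measure.AbsolutelyContinuous.add_left ?_ ?_ <;>
    refine .smul_left (Measure.absolutelyContinuous_of_le
      (Measure.restrict_mono (Ioo_subset_Ioo ?_ ?_) le_rfl)) _ <;> linarith

lemma ae_lowHighUniform_mem (hM : 0 ≤ M) : ∀ᵐ b ∂lowHighUniform δ M, b ∈ Ioo 0 (M + 1) :=
  (lowHighUniform_absolutelyContinuous hM).ae_le (ae_restrict_mem measurableSet_Ioo)

lemma lowHighUniform_Iio_zero (hM : 0 ≤ M) : lowHighUniform δ M (Iio 0) = 0 :=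
  measure_eq_zero_iff_ae_notMem.2 <| (ae_lowHighUniform_mem hM).mono fun _ hb => not_lt.2 hb.1.le

lemma lowHighUniform_Iic_one (hδ : δ ∈ Icc (0 : ℝ) 1) (hM : 1 ≤ M) :
    (lowHighUniform δ M).real (Iic 1) = 1 - δ := by
  have hlow : Iic 1 ∩ Ioo (0 : ℝ) 1 = Ioo 0 1 := inter_eq_right.2 fun _ hb => hb.2.le
  have hhigh : Iic 1 ∩ Ioo M (M + 1) = ∅ :=
    eq_empty_of_forall_notMem fun b ⟨hb1, hbM, _⟩ => by
      rw [mem_Iic] at hb1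
      linarith
  rw [measureReal_def, lowHighUniform_apply measurableSet_Iic, hlow, hhigh, measure_empty,
    Real.volume_Ioo, sub_zero, ENNReal.ofReal_one, mul_one, mul_zero, add_zero,
    ENNReal.toReal_ofReal (by linarith [hδ.2])]

lemma lowHighUniform_Iic_lt_one (hδ : δ ∈ Ioc (0 : ℝ) 1) {y : ℝ} (hy : y < M + 1) :
    (lowHighUniform δ M).real (Iic y) < 1 := by
  have := isProbabilityMeasure_lowHighUniform (M := M) (Ioc_subset_Icc_self hδ)
  have hgap : Ioo (max y M) (M + 1) ⊆ Ioi y ∩ Ioo M (M + 1) := fun b hb =>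
    ⟨(le_max_left y M).trans_lt hb.1, (le_max_right y M).trans_lt hb.1, hb.2⟩
  have htail : 0 < lowHighUniform δ M (Ioi y) := by
    rw [lowHighUniform_apply measurableSet_Ioi]
    refine (ENNReal.mul_pos (by simpa using hδ.1) ?_).trans_le le_add_self
    refine (lt_of_lt_of_le ?_ (measure_mono hgap)).ne'
    rw [Real.volume_Ioo, ENNReal.ofReal_pos, sub_pos]
    exact max_lt hy (lt_add_one M)
  rw [← compl_Ioi, probReal_compl_eq_one_sub measurableSet_Ioi, sub_lt_self_iff]
  exact ENNReal.toReal_pos htail.ne' (measure_ne_top _ _)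

lemma lowHighUniform_Ioo_high (hδ : δ ∈ Icc (0 : ℝ) 1) (hM : 1 ≤ M) :
    (lowHighUniform δ M).real (Ioo M (M + 1)) = δ := by
  have hlow : Ioo M (M + 1) ∩ Ioo (0 : ℝ) 1 = ∅ :=
    eq_empty_of_forall_notMem fun b ⟨⟨hMb, _⟩, _, hb1⟩ => by linarith
  rw [measureReal_def, lowHighUniform_apply measurableSet_Ioo, hlow, inter_self, measure_empty,
    Real.volume_Ioo, add_sub_cancel_left, ENNReal.ofReal_one, mul_one, mul_zero, zero_add,
    ENNReal.toReal_ofReal hδ.1]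

lemma quantileFn_lowHighUniform_le_one_or (hδ : δ ∈ Ioc (0 : ℝ) 1) (hM : 1 ≤ M) {x : ℝ}
    (hx : x ∉ Ioo (1 - δ) 1) :
    quantileFn (lowHighUniform δ M) x ≤ 1 ∨ M + 1 ≤ quantileFn (lowHighUniform δ M) x := by
  have := isProbabilityMeasure_lowHighUniform (M := M) (Ioc_subset_Icc_self hδ)
  rcases le_or_gt x 0 with hx0 | hx0
  · exact .inl (by rw [quantileFn_of_nonpos hx0]; exact zero_le_one)
  rcases le_or_gt x (1 - δ) with hxδ | hxδ
  · rw [← lowHighUniform_Iic_one (Ioc_subset_Icc_self hδ) hM] at hxδ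
    exact .inl (quantileFn_le hx0 hxδ)
  rcases (le_of_not_gt fun h => hx ⟨hxδ, h⟩).eq_or_lt with rfl | hx1
  · have hsupp : (lowHighUniform δ M).real (Iic (M + 1)) = 1 := by
      have := (ae_mem_iff_measure_eq measurableSet_Iic.nullMeasurableSet).1 <|
        (ae_lowHighUniform_mem (δ := δ) (by linarith)).mono fun _ hb => (hb.2.le : _ ≤ M + 1)
      rw [measureReal_def, this, measure_univ, ENNReal.toReal_one]
    exact .inr (le_quantileFn hsupp.ge fun _ ht => lowHighUniform_Iic_lt_one hδ ht)
  · exact .inl (by rw [quantileFn_of_one_lt hx1]; exact zero_le_one)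

lemma welfare_lowHighUniform_eq_two (hδ : δ ∈ Icc (0 : ℝ) 1) (hM : 0 ≤ M) {p : ℝ}
    (hp : p ≤ 1 ∨ M + 1 ≤ p) : welfare (Measure.dirac 2) (lowHighUniform δ M) p = 2 := by
  have := isProbabilityMeasure_lowHighUniform (M := M) hδ
  refine welfare_dirac_of_ae_not_trade ?_
  filter_upwards [ae_lowHighUniform_mem hM] with b hb
  rintro ⟨h2p, hpb⟩
  rcases hp with hp | hp <;> linarith [hb.2]

lemma integrable_max_two_lowHighUniform (hδ : δ ∈ Icc (0 : ℝ) 1) (hM : 0 ≤ M) :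
    Integrable (fun b => max 2 b) (lowHighUniform δ M) := by
  have := isProbabilityMeasure_lowHighUniform (M := M) hδ
  refine .of_bound (by fun_prop) (max 2 (M + 1)) ?_
  filter_upwards [ae_lowHighUniform_mem hM] with b hb
  rw [Real.norm_of_nonneg (zero_le_two.trans (le_max_left 2 b))]
  exact max_le_max le_rfl hb.2.le

lemma mul_le_optWelfare_lowHighUniform (hδ : δ ∈ Icc (0 : ℝ) 1) (hM : 1 ≤ M) :
    δ * M ≤ optWelfare (Measure.dirac 2) (lowHighUniform δ M) := by
  have := isProbabilityMeasure_lowHighUniform (M := M) hδ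
  calc δ * M = ∫ b, (Ioo M (M + 1)).indicator (fun _ => M) b ∂lowHighUniform δ M := by
        rw [integral_indicator_const _ measurableSet_Ioo, lowHighUniform_Ioo_high hδ hM,
          smul_eq_mul]
    _ ≤ ∫ b, max 2 b ∂lowHighUniform δ M := by
        refine integral_mono ((integrable_const M).indicator measurableSet_Ioo)
          (integrable_max_two_lowHighUniform hδ (by linarith)) fun b => ?_
        exact indicator_apply_le' (fun hb => hb.1.le.trans (le_max_right 2 b))
          fun _ => zero_le_two.trans (le_max_left 2 b)
    _ = optWelfare (Measure.dirac 2) (lowHighUniform δ M) := (optWelfare_dirac 2).symm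

lemma integral_welfare_quantileFn_lowHighUniform_le (Q : Measure ℝ) [IsProbabilityMeasure Q]
    (hδ : δ ∈ Ioc (0 : ℝ) 1) (hM : 1 ≤ M) :
    ∫ x, welfare (Measure.dirac 2) (lowHighUniform δ M) (quantileFn (lowHighUniform δ M) x) ∂Q ≤
      2 + Q.real (Ioo (1 - δ) 1) * optWelfare (Measure.dirac 2) (lowHighUniform δ M) := by
  set ν := lowHighUniform δ M
  set OPT := optWelfare (Measure.dirac 2) ν
  have hδ' : δ ∈ Icc (0 : ℝ) 1 := Ioc_subset_Icc_self hδ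
  have := isProbabilityMeasure_lowHighUniform (M := M) hδ'
  have hseller : ∀ᵐ s ∂Measure.dirac (2 : ℝ), 0 ≤ s := by simp
  have hint : Integrable (fun z : ℝ × ℝ => max z.1 z.2) ((Measure.dirac 2).prod ν) :=
    (integrable_max_dirac_prod_iff 2).2 (integrable_max_two_lowHighUniform hδ' (by linarith))
  have hbound : ∀ x, welfare (Measure.dirac 2) ν (quantileFn ν x) ≤
      2 + (Ioo (1 - δ) 1).indicator (fun _ => OPT) x := by
    intro x
    by_cases hx : x ∈ Ioo (1 - δ) 1
    · rw [indicator_of_mem hx]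
      linarith [welfare_le_optWelfare hseller hint (quantileFn ν x)]
    · rw [indicator_of_notMem hx, add_zero, welfare_lowHighUniform_eq_two hδ' (by linarith)
        (quantileFn_lowHighUniform_le_one_or hδ hM hx)]
  have hint_window : Integrable ((Ioo (1 - δ) 1).indicator fun _ => OPT) Q :=
    (integrable_const OPT).indicator measurableSet_Ioo
  calc ∫ x, welfare (Measure.dirac 2) ν (quantileFn ν x) ∂Q
      ≤ ∫ x, 2 + (Ioo (1 - δ) 1).indicator (fun _ => OPT) x ∂Q :=
        integral_mono_of_nonneg (.of_forall fun _ => welfare_nonneg hseller _)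
          ((integrable_const 2).add hint_window) (.of_forall hbound)
    _ = 2 + Q.real (Ioo (1 - δ) 1) * OPT := by
        rw [integral_add (integrable_const 2) hint_window, integral_const,
          integral_indicator_const _ measurableSet_Ioo, probReal_univ, one_smul, smul_eq_mul]

end LowHighUniform

theorem stmt_10_general (ε : ℝ) (hε : 0 < ε) (Q : Measure ℝ) [IsProbabilityMeasure Q] :
    ∃ μ ν : Measure ℝ, IsProbabilityMeasure μ ∧ IsProbabilityMeasure ν ∧
      μ (Set.Iio 0) = 0 ∧ ν (Set.Iio 0) = 0 ∧
      (∀ x : ℝ, ν {x} = 0) ∧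
      Integrable (fun z : ℝ × ℝ => max z.1 z.2) (μ.prod ν) ∧
      0 < optWelfare μ ν ∧
      (∫ x, welfare μ ν (quantileFn ν x) ∂Q) ≤ ε * optWelfare μ ν := by
  obtain ⟨δ, hδ, hQδ⟩ := exists_measure_Ioo_sub_lt Q 1 (ENNReal.ofReal_pos.2 (half_pos hε))
  have hδ' : δ ∈ Icc (0 : ℝ) 1 := Ioo_subset_Icc_self hδ
  have hεδ : 0 < ε * δ := mul_pos hε hδ.1
  set M := 4 / (ε * δ) + 1 with hM_def
  have hM : 1 ≤ M := le_add_of_nonneg_left (div_nonneg zero_le_four hεδ.le)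
  have := isProbabilityMeasure_lowHighUniform (M := M) hδ'
  set OPT := optWelfare (Measure.dirac 2) (lowHighUniform δ M)
  have hOPT : 4 ≤ ε * OPT := calc
    4 ≤ ε * δ * M := by
      rw [hM_def, mul_add, mul_div_cancel₀ _ hεδ.ne', mul_one]
      linarith
    _ ≤ ε * OPT := by
      rw [mul_assoc]
      exact mul_le_mul_of_nonneg_left (mul_le_optWelfare_lowHighUniform hδ' hM) hε.le
  have hOPT_pos : 0 < OPT := pos_of_mul_pos_right (by linarith) hε.le
  have hq : Q.real (Ioo (1 - δ) 1) ≤ ε / 2 :=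
    ENNReal.toReal_le_of_le_ofReal (half_pos hε).le hQδ.le
  refine ⟨Measure.dirac 2, lowHighUniform δ M, inferInstance,
    this, by simp, lowHighUniform_Iio_zero (by linarith),
    fun x => lowHighUniform_absolutelyContinuous (by linarith) (measure_singleton x),
    (integrable_max_dirac_prod_iff 2).2 (integrable_max_two_lowHighUniform hδ' (by linarith)),
    hOPT_pos, ?_⟩
  calc _ ≤ 2 + Q.real (Ioo (1 - δ) 1) * OPT :=
        integral_welfare_quantileFn_lowHighUniform_le Q (Ioo_subset_Ioc_self hδ) hM
    _ ≤ ε * OPT := by nlinarith [mul_le_mul_of_nonneg_right hq hOPT_pos.le]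

/-- No quantile mechanism over the buyer's distribution achieves a constant fraction of
the optimal welfare: for every `ε > 0` and every quantile distribution `Q` on `[0,1]`
there is an instance (with atomless buyer distribution, `0 < OPT < ∞`) on which the
mechanism posting `F_B⁻¹(x)`, `x ~ Q`, gets at most `ε · OPT`. -/
theorem stmt_10 (ε : ℝ) (hε : 0 < ε) (Q : Measure ℝ) [IsProbabilityMeasure Q]
    (hQ : Q (Set.Icc (0:ℝ) 1)ᶜ = 0) :
    ∃ μ ν : Measure ℝ, IsProbabilityMeasure μ ∧ IsProbabilityMeasure ν ∧
      μ (Set.Iio 0) = 0 ∧ ν (Set.Iio 0) = 0 ∧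
      (∀ x : ℝ, ν {x} = 0) ∧
      Integrable (fun z : ℝ × ℝ => max z.1 z.2) (μ.prod ν) ∧
      0 < optWelfare μ ν ∧
      (∫ x, welfare μ ν (quantileFn ν x) ∂Q) ≤ ε * optWelfare μ ν :=
  stmt_10_general ε hε Q
end

section
/- For every atomless Borel probability measure F on [0,∞) with finite first moment, posting the (√2/2)-quantile of F as the price yields welfare at least (2+√2)/4 of the optimal welfare on the symmetric instance: W((F,F), F^{-1}(√2/2)) ≥ ((2+√2)/4) · OPT((F,F)). -/
open MeasureTheory

/-!
By the layer-cake formula, every term is an integral over `t > 0` of a function of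
`Φ t = F (Iic t)`: `OPT = ∫ (1 - Φ²)`, and splitting `B - S = (p - S) + (B - p)` on
`S ≤ p ≤ B` together with `Φ p = q := √2/2` (no atoms) gives
`W = ∫ (1 - Φ) + (1 - q) ∫_{t < p} Φ + q ∫_{t > p} (1 - Φ)`.
The comparison then holds pointwise: with `c = (2 + √2)/4` we have `1 + q = 2c`, and
`1 - q x - c (1 - x²) = c (x - (√2 - 1))²` and `(1 + q)(1 - x) - c (1 - x²) = c (1 - x)²`.
-/

open Set Filter ProbabilityTheory

lemma integral_comp_add_right_Ioi_zero {E : Type*} [NormedAddCommGroup E] [NormedSpace ℝ E]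
    (f : ℝ → E) (p : ℝ) : ∫ t in Ioi 0, f (t + p) = ∫ t in Ioi p, f t := by
  have hpre : (fun t => t + p) ⁻¹' Ioi p = Ioi 0 := by ext t; simp
  rw [← hpre]
  exact (measurePreserving_add_right volume p).setIntegral_preimage_emb
    (MeasurableEquiv.addRight p).measurableEmbedding f (Ioi p)

lemma integral_comp_sub_left_Ioi_zero {E : Type*} [NormedAddCommGroup E] [NormedSpace ℝ E]
    (f : ℝ → E) (p : ℝ) : ∫ t in Ioi 0, f (p - t) = ∫ t in Iio p, f t := by
  have hpre : (fun t => p - t) ⁻¹' Iio p = Ioi 0 := by ext t; simp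
  rw [← hpre]
  exact (Measure.measurePreserving_sub_left volume p).setIntegral_preimage_emb
    (MeasurableEquiv.subLeft p).measurableEmbedding f (Iio p)

section LayerCake

variable {μ : Measure ℝ}

lemma ae_nonneg_of_measure_Iio_eq_zero (hμ0 : μ (Iio 0) = 0) : ∀ᵐ x ∂μ, 0 ≤ x := by
  rw [ae_iff]
  simp only [not_le]
  exact hμ0

lemma integral_eq_integral_measureReal_Ioi (hμ0 : μ (Iio 0) = 0) (hμ : Integrable id μ) :
    ∫ x, x ∂μ = ∫ t in Ioi 0, μ.real (Ioi t) :=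
  hμ.integral_eq_integral_meas_lt (ae_nonneg_of_measure_Iio_eq_zero hμ0)

lemma integrableOn_measureReal_Ioi (hμ0 : μ (Iio 0) = 0) (hμ : Integrable id μ) :
    IntegrableOn (fun t => μ.real (Ioi t)) (Ioi 0) := by
  have hanti : Antitone fun t => μ (Ioi t) := fun _ _ h => measure_mono (Ioi_subset_Ioi h)
  refine integrable_toReal_of_lintegral_ne_top hanti.measurable.aemeasurable ?_
  exact ((lintegral_eq_lintegral_meas_lt μ (ae_nonneg_of_measure_Iio_eq_zero hμ0)
    hμ.aemeasurable).symm.trans_lt hμ.lintegral_lt_top).ne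

lemma integral_max_sub_const_zero [IsFiniteMeasure μ] (hμ : Integrable id μ) (p : ℝ) :
    ∫ x, max (x - p) 0 ∂μ = ∫ t in Ioi p, μ.real (Ioi t) := by
  have hint : Integrable (fun x => max (x - p) 0) μ := (hμ.sub (integrable_const p)).pos_part
  rw [hint.integral_eq_integral_meas_lt (ae_of_all _ fun _ => le_max_right _ _),
    ← integral_comp_add_right_Ioi_zero (fun t => μ.real (Ioi t))]
  refine setIntegral_congr_fun measurableSet_Ioi fun t (ht : 0 < t) => ?_
  congr 1
  ext x
  simp only [mem_ofPred_eq, mem_Ioi, lt_max_iff, ht.not_gt, or_false]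
  constructor <;> intro h <;> linarith

lemma integral_max_const_sub_zero [IsFiniteMeasure μ] (hμ : Integrable id μ) (p : ℝ) :
    ∫ x, max (p - x) 0 ∂μ = ∫ t in Iio p, μ.real (Iio t) := by
  have hint : Integrable (fun x => max (p - x) 0) μ := ((integrable_const p).sub hμ).pos_part
  rw [hint.integral_eq_integral_meas_lt (ae_of_all _ fun _ => le_max_right _ _),
    ← integral_comp_sub_left_Ioi_zero (fun t => μ.real (Iio t))]
  refine setIntegral_congr_fun measurableSet_Ioi fun t (ht : 0 < t) => ?_
  congr 1
  ext x
  simp only [mem_ofPred_eq, mem_Iio, lt_max_iff, ht.not_gt, or_false]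
  constructor <;> intro h <;> linarith

end LayerCake

lemma optWelfare_eq_integral_cdf {μ ν : Measure ℝ} [IsProbabilityMeasure μ]
    [IsProbabilityMeasure ν] (hμ0 : μ (Iio 0) = 0) (hμ : Integrable id μ)
    (hν : Integrable id ν) :
    optWelfare μ ν = ∫ t in Ioi 0, (1 - cdf μ t * cdf ν t) := by
  have hint : Integrable (fun z : ℝ × ℝ => max z.1 z.2) (μ.prod ν) :=
    (hμ.comp_fst ν).sup (hν.comp_snd μ)
  have hnonneg : 0 ≤ᵐ[μ.prod ν] fun z => max z.1 z.2 := by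
    filter_upwards [Measure.quasiMeasurePreserving_fst.ae
      (ae_nonneg_of_measure_Iio_eq_zero hμ0)] with z hz
    exact hz.trans (le_max_left _ _)
  rw [optWelfare, hint.integral_eq_integral_meas_lt hnonneg]
  refine setIntegral_congr_fun measurableSet_Ioi fun t _ => ?_
  have hcompl : {z : ℝ × ℝ | t < max z.1 z.2} = (Iic t ×ˢ Iic t)ᶜ := by
    ext z
    simp only [mem_ofPred_eq, lt_max_iff, mem_compl_iff, mem_prod, mem_Iic, not_and_or, not_le]
  rw [hcompl, probReal_compl_eq_one_sub (measurableSet_Iic.prod measurableSet_Iic),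
    measureReal_prod_prod, cdf_eq_real, cdf_eq_real]

lemma welfare_eq_integral_add_gains {μ ν : Measure ℝ} [IsFiniteMeasure μ]
    [IsProbabilityMeasure ν] (hμ : Integrable id μ) (hν : Integrable id ν) (p : ℝ) :
    welfare μ ν p = ∫ x, x ∂μ + (∫ x, max (p - x) 0 ∂μ) * ν.real (Ici p)
      + μ.real (Iic p) * ∫ y, max (y - p) 0 ∂ν := by
  have hsplit : ∀ z : ℝ × ℝ, (z.1 + if z.1 ≤ p ∧ p ≤ z.2 then z.2 - z.1 else 0) =
      z.1 + max (p - z.1) 0 * (Ici p).indicator 1 z.2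
        + (Iic p).indicator 1 z.1 * max (z.2 - p) 0 := by
    intro z
    simp only [indicator_apply, mem_Ici, mem_Iic, Pi.one_apply]
    split_ifs <;> grind
  have hfst : Integrable (fun z : ℝ × ℝ => z.1) (μ.prod ν) := hμ.comp_fst ν
  have hbuyer : Integrable (fun z : ℝ × ℝ => max (p - z.1) 0 * (Ici p).indicator 1 z.2)
      (μ.prod ν) :=
    ((integrable_const p).sub hμ).pos_part.mul_prod
      ((integrable_const 1).indicator measurableSet_Ici)
  have hseller : Integrable (fun z : ℝ × ℝ => (Iic p).indicator 1 z.1 * max (z.2 - p) 0)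
      (μ.prod ν) :=
    ((integrable_const 1).indicator measurableSet_Iic).mul_prod
      (hν.sub (integrable_const p)).pos_part
  have hfst_buyer : Integrable
      (fun z : ℝ × ℝ => z.1 + max (p - z.1) 0 * (Ici p).indicator 1 z.2) (μ.prod ν) :=
    hfst.add hbuyer
  rw [welfare, integral_congr_ae (ae_of_all _ hsplit), integral_add hfst_buyer hseller,
    integral_add hfst hbuyer, integral_fun_fst (fun x => x),
    integral_prod_mul (fun x => max (p - x) 0) ((Ici p).indicator 1),
    integral_prod_mul ((Iic p).indicator 1) (fun y => max (y - p) 0),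
    integral_indicator_one measurableSet_Ici, integral_indicator_one measurableSet_Iic]
  simp

section Cdf

variable (μ : Measure ℝ) [IsProbabilityMeasure μ]

lemma continuous_cdf [NullSingletonClass μ] : Continuous (cdf μ) := by
  refine continuous_iff_continuousAt.2 fun x => ?_
  rw [(monotone_cdf μ).continuousAt_iff_leftLim_eq_rightLim, StieltjesFunction.rightLim_eq]
  have hjump := (cdf μ).measure_singleton x
  rw [measure_cdf, measure_singleton, eq_comm, ENNReal.ofReal_eq_zero, sub_nonpos] at hjump
  exact le_antisymm ((monotone_cdf μ).leftLim_le le_rfl) hjump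

lemma cdf_quantileFn [NullSingletonClass μ] {q : ℝ} (hq0 : 0 < q) (hq1 : q < 1) :
    cdf μ (quantileFn μ q) = q := by
  have hS : {y : ℝ | q ≤ (μ (Iic y)).toReal} = cdf μ ⁻¹' Ici q := by
    ext y
    simp [cdf_eq_real, measureReal_def]
  have hne : (cdf μ ⁻¹' Ici q).Nonempty :=
    ((tendsto_cdf_atTop μ).eventually (eventually_ge_nhds hq1)).exists
  obtain ⟨b, hb⟩ := ((tendsto_cdf_atBot μ).eventually (eventually_lt_nhds hq0)).exists
  have hbdd : BddBelow (cdf μ ⁻¹' Ici q) :=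
    ⟨b, fun y hy => le_of_not_gt fun hyb => ((monotone_cdf μ hyb.le).trans_lt hb).not_ge hy⟩
  rw [quantileFn, hS]
  refine le_antisymm (not_lt.1 fun hlt => ?_)
    ((isClosed_Ici.preimage (continuous_cdf μ)).csInf_mem hne hbdd)
  obtain ⟨t, ht, hqt⟩ :=
    ((continuous_cdf μ).tendsto _ |>.eventually (eventually_gt_nhds hlt)).exists_lt
  exact ht.not_ge (csInf_le hbdd hqt.le)

lemma cdf_eq_zero_of_nonpos [NullSingletonClass μ] (hμ0 : μ (Iio 0) = 0) {t : ℝ}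
    (ht : t ≤ 0) : cdf μ t = 0 := by
  rw [cdf_eq_real, measureReal_eq_zero_iff]
  exact measure_mono_null (Iic_subset_Iic.2 ht) ((measure_congr Iio_ae_eq_Iic).symm.trans hμ0)

lemma measureReal_Iio_eq_cdf [NullSingletonClass μ] (t : ℝ) : μ.real (Iio t) = cdf μ t := by
  rw [cdf_eq_real, measureReal_def, measureReal_def, measure_congr Iio_ae_eq_Iic]

lemma measureReal_Ioi_eq_one_sub_cdf (t : ℝ) : μ.real (Ioi t) = 1 - cdf μ t := by
  rw [← compl_Iic, probReal_compl_eq_one_sub measurableSet_Iic, cdf_eq_real]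

lemma measureReal_Ici_eq_one_sub_cdf [NullSingletonClass μ] (t : ℝ) :
    μ.real (Ici t) = 1 - cdf μ t := by
  rw [← compl_Iio, probReal_compl_eq_one_sub measurableSet_Iio, measureReal_Iio_eq_cdf]

end Cdf

lemma mul_one_sub_sq_le_one_sub_mul (x : ℝ) :
    (2 + √2) / 4 * (1 - x * x) ≤ 1 - √2 / 2 * x := by
  have h2 : √2 * √2 = 2 := Real.mul_self_sqrt zero_le_two
  have hsq : 1 - √2 / 2 * x - (2 + √2) / 4 * (1 - x * x) =
      (2 + √2) / 4 * (x - (√2 - 1)) ^ 2 := by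
    linear_combination (x / 2 - √2 / 4) * h2
  have : 0 ≤ (2 + √2) / 4 * (x - (√2 - 1)) ^ 2 := by positivity
  linarith

lemma mul_one_sub_sq_le_mul_one_sub (x : ℝ) :
    (2 + √2) / 4 * (1 - x * x) ≤ (1 + √2 / 2) * (1 - x) := by
  nlinarith [mul_nonneg (by positivity : (0 : ℝ) ≤ (2 + √2) / 4) (sq_nonneg (1 - x))]

lemma mul_integral_one_sub_sq_le {Φ : ℝ → ℝ} (hmono : Monotone Φ) (hΦ0 : ∀ t ≤ 0, Φ t = 0)
    (hΦ1 : ∀ t, Φ t ≤ 1) (hint : IntegrableOn (fun t => 1 - Φ t) (Ioi 0)) {p : ℝ}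
    (hp : 0 ≤ p) :
    (2 + √2) / 4 * ∫ t in Ioi 0, (1 - Φ t * Φ t) ≤
      (∫ t in Ioi 0, (1 - Φ t)) + (∫ t in Iio p, Φ t) * (1 - √2 / 2)
        + √2 / 2 * ∫ t in Ioi p, (1 - Φ t) := by
  have hbelow : ∫ t in Iio p, Φ t = ∫ t in Ioi 0, (Iic p).indicator Φ t := by
    rw [setIntegral_indicator measurableSet_Iic, ← integral_Iic_eq_integral_Iio]
    exact setIntegral_eq_of_subset_of_forall_sdiff_eq_zero (s := Ioi 0 ∩ Iic p)
      measurableSet_Iic inter_subset_right fun t ht => hΦ0 t (not_lt.1 fun h => ht.2 ⟨h, ht.1⟩)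
  have habove :
      ∫ t in Ioi p, (1 - Φ t) = ∫ t in Ioi 0, (Ioi p).indicator (fun t => 1 - Φ t) t := by
    rw [setIntegral_indicator measurableSet_Ioi, inter_eq_right.2 (Ioi_subset_Ioi hp)]
  have hbelow_int : IntegrableOn ((Iic p).indicator Φ) (Ioi 0) := by
    have hIcc : IntegrableOn Φ (Icc 0 p) :=
      hmono.locallyIntegrable.integrableOn_isCompact isCompact_Icc
    refine (hIcc.integrable_indicator measurableSet_Icc).integrableOn.congr_fun
      (fun t (ht : 0 < t) => ?_) measurableSet_Ioi
    by_cases htp : t ≤ p <;> simp [indicator, htp, ht.le]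
  have habove_int : IntegrableOn ((Ioi p).indicator fun t => 1 - Φ t) (Ioi 0) :=
    hint.indicator measurableSet_Ioi
  have hsum_int :
      IntegrableOn (fun t => 1 - Φ t + (Iic p).indicator Φ t * (1 - √2 / 2)) (Ioi 0) :=
    hint.add (hbelow_int.mul_const _)
  calc (2 + √2) / 4 * ∫ t in Ioi 0, (1 - Φ t * Φ t)
      = ∫ t in Ioi 0, (2 + √2) / 4 * (1 - Φ t * Φ t) := (integral_const_mul _ _).symm
    _ ≤ ∫ t in Ioi 0, (1 - Φ t + (Iic p).indicator Φ t * (1 - √2 / 2)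
          + √2 / 2 * (Ioi p).indicator (fun t => 1 - Φ t) t) := by
      refine integral_mono_of_nonneg (ae_of_all _ fun t => ?_)
        (hsum_int.add (habove_int.const_mul _)) (ae_of_all _ fun t => ?_)
      · have hΦ_nonneg : 0 ≤ Φ t :=
          (hΦ0 _ (min_le_right t 0)).symm.le.trans (hmono (min_le_left t 0))
        exact mul_nonneg (by positivity) (by nlinarith [hΦ1 t])
      · rcases le_or_gt t p with htp | htp
        · simp only [indicator, mem_Iic, htp, ↓reduceIte, mem_Ioi, htp.not_gt, mul_zero, add_zero]
          linarith [mul_one_sub_sq_le_one_sub_mul (Φ t)]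
        · simp only [indicator, mem_Iic, htp.not_ge, ↓reduceIte, zero_mul, add_zero, mem_Ioi, htp]
          linarith [mul_one_sub_sq_le_mul_one_sub (Φ t)]
    _ = _ := by
      rw [integral_add hsum_int (habove_int.const_mul _),
        integral_add hint (hbelow_int.mul_const _), integral_mul_const, integral_const_mul,
        hbelow, habove]

/-- On every symmetric instance (atomless `F` on `[0,∞)` with finite first moment),
posting the `√2/2`-quantile of `F` as the price obtains at least `(2+√2)/4` of the
optimal welfare. -/
theorem stmt_13 (F : Measure ℝ) [IsProbabilityMeasure F] (hF : F (Set.Iio 0) = 0)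
    (hatomless : ∀ x : ℝ, F {x} = 0) (hFi : Integrable id F) :
    ((2 + Real.sqrt 2) / 4) * optWelfare F F ≤
      welfare F F (quantileFn F (Real.sqrt 2 / 2)) := by
  have : NullSingletonClass F := ⟨hatomless⟩
  have hq0 : 0 < √2 / 2 := by positivity
  have hq1 : √2 / 2 < 1 := by
    rw [div_lt_one two_pos, Real.sqrt_lt' two_pos]
    norm_num
  set p := quantileFn F (√2 / 2)
  have hq : cdf F p = √2 / 2 := cdf_quantileFn F hq0 hq1
  have hp : 0 ≤ p := le_of_not_gt fun h => by
    linarith [cdf_eq_zero_of_nonpos F hF h.le]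
  rw [welfare_eq_integral_add_gains hFi hFi, optWelfare_eq_integral_cdf hF hFi hFi,
    integral_eq_integral_measureReal_Ioi hF hFi, integral_max_const_sub_zero hFi,
    integral_max_sub_const_zero hFi, measureReal_Ici_eq_one_sub_cdf, ← cdf_eq_real, hq]
  simp only [measureReal_Iio_eq_cdf, measureReal_Ioi_eq_one_sub_cdf]
  have hint : IntegrableOn (fun t => 1 - cdf F t) (Ioi 0) := by
    simpa only [measureReal_Ioi_eq_one_sub_cdf] using integrableOn_measureReal_Ioi hF hFi
  exact mul_integral_one_sub_sq_le (monotone_cdf F) (fun t => cdf_eq_zero_of_nonpos F hF)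
    (cdf_le_one F) hint hp
end
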